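/- Coercivity of the weighted sum of Bregman distances for small γ: Let b : ℝ → ℝ be continuous with 0 < b₁ ≤ b(s) ≤ b₂ for all s, let 𝒢(s) := ∫₀^s ∫₀^r b(u)⁻¹ du dr, and let f : ℝ → ℝ be twice differentiable with f''(s) ≥ −f₁ for all s, where f₁ > 0. Then for every γ with 0 < γ ≤ 1/(2 f₁ b₂) and all x, y ∈ ℝ, γ·(f(x) − f(y) − f'(y)(x − y)) + (𝒢(x) − 𝒢(y) − 𝒢'(y)(x − y)) ≥ (x − y)²/(4 b₂). -/

import Mathlib

/-!
Both Bregman distances are bounded below by Taylor's theorem: `f'' ≥ -f₁` gives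
`f(x|y) ≥ -f₁ (x - y)² / 2`, and `𝒢'' = 1 / b ≥ 1 / b₂` gives `𝒢(x|y) ≥ (x - y)² / (2 b₂)`.
For `γ f₁ ≤ 1 / (2 b₂)` the convex part `𝒢` absorbs the negative part of `γ f`, losing at most
half of its constant.
-/

open intervalIntegral Set

def bregman (φ φ' : ℝ → ℝ) (x y : ℝ) : ℝ :=
  φ x - φ y - φ' y * (x - y)

lemma bregman_nonneg_of_monotone_deriv {φ φ' : ℝ → ℝ} (hφ : ∀ s, HasDerivAt φ (φ' s) s)
    (hmono : Monotone φ') (x y : ℝ) : 0 ≤ bregman φ φ' x y := by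
  set ψ : ℝ → ℝ := fun s => φ s - φ' y * s
  have hψ : ∀ s, HasDerivAt ψ (φ' s - φ' y) s := fun s => by
    simpa using (hφ s).fun_sub ((hasDerivAt_id s).const_mul (φ' y))
  have hconvex : ConvexOn ℝ univ ψ := by
    refine Monotone.convexOn_univ_of_deriv (fun s => (hψ s).differentiableAt) ?_
    rw [funext fun s => (hψ s).deriv]
    exact fun s t hst => sub_le_sub_right (hmono hst) _
  have hmin : IsMinOn ψ univ y := by
    refine hconvex.isMinOn_of_rightDeriv_eq_zero (by simp) ?_
    rw [(hψ y).hasDerivWithinAt.derivWithin (uniqueDiffWithinAt_Ioi y), sub_self]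
  have : ψ y ≤ ψ x := hmin (mem_univ x)
  unfold bregman
  linarith

lemma mul_sq_div_two_le_bregman {h h' h'' : ℝ → ℝ} (hd : ∀ s, HasDerivAt h (h' s) s)
    (hd2 : ∀ s, HasDerivAt h' (h'' s) s) {m : ℝ} (hm : ∀ s, m ≤ h'' s) (x y : ℝ) :
    m * (x - y) ^ 2 / 2 ≤ bregman h h' x y := by
  have hφ : ∀ s, HasDerivAt (fun s => h s - m * s ^ 2 / 2) (h' s - m * s) s := fun s => by
    refine ((hd s).fun_sub (((hasDerivAt_pow 2 s).const_mul m).div_const 2)).congr_deriv ?_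
    push_cast
    ring
  have hmono : Monotone fun s => h' s - m * s := by
    refine monotone_of_hasDerivAt_nonneg (f' := fun s => h'' s - m) (fun s => ?_) ?_
    · simpa using (hd2 s).fun_sub ((hasDerivAt_id s).const_mul m)
    · exact fun s => sub_nonneg.mpr (hm s)
  have := bregman_nonneg_of_monotone_deriv hφ hmono x y
  unfold bregman at this ⊢
  linarith

theorem weighted_bregman_coercivity_general
    (b : ℝ → ℝ) (b₁ b₂ : ℝ) (hb₁ : 0 < b₁)
    (hbl : ∀ s, b₁ ≤ b s) (hbu : ∀ s, b s ≤ b₂)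
    (hbc : Continuous b)
    (G : ℝ → ℝ)
    (hG : ∀ s, G s = ∫ r in (0:ℝ)..s, ∫ u in (0:ℝ)..r, (b u)⁻¹)
    (f f' f'' : ℝ → ℝ)
    (hf' : ∀ s, HasDerivAt f (f' s) s)
    (hf'' : ∀ s, HasDerivAt f' (f'' s) s)
    (f₁ : ℝ)
    (hsemi : ∀ s, -f₁ ≤ f'' s)
    (γ : ℝ) (hγ : 0 < γ) (hγsmall : γ ≤ 1 / (2 * f₁ * b₂)) :
    ∀ x y : ℝ, (x - y) ^ 2 / (4 * b₂) ≤
      γ * (f x - f y - f' y * (x - y)) + (G x - G y - deriv G y * (x - y)) := by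
  intro x y
  have hb_pos : ∀ s, 0 < b s := fun s => hb₁.trans_le (hbl s)
  have hb₂ : 0 < b₂ := (hb_pos 0).trans_le (hbu 0)
  have hbinv : Continuous fun u => (b u)⁻¹ := hbc.inv₀ fun s => (hb_pos s).ne'
  set g : ℝ → ℝ := fun r => ∫ u in (0:ℝ)..r, (b u)⁻¹
  have hg : ∀ r, HasDerivAt g (b r)⁻¹ r := fun r =>
    (hbinv.integral_hasStrictDerivAt 0 r).hasDerivAt
  have hgc : Continuous g := continuous_iff_continuousAt.mpr fun r => (hg r).continuousAt
  have hG' : ∀ s, HasDerivAt G (g s) s := fun s => by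
    rw [funext hG]
    exact (hgc.integral_hasStrictDerivAt 0 s).hasDerivAt
  have hf_bregman := mul_sq_div_two_le_bregman hf' hf'' hsemi x y
  have hG_bregman := mul_sq_div_two_le_bregman hG' hg
    (fun s => inv_anti₀ (hb_pos s) (hbu s)) x y
  have hγf₁ : γ * (2 * f₁ * b₂) ≤ 1 :=
    (le_div_iff₀ (one_div_pos.mp (hγ.trans_le hγsmall))).mp hγsmall
  rw [(hG' y).deriv]
  unfold bregman at hf_bregman hG_bregman
  calc (x - y) ^ 2 / (4 * b₂)
      ≤ γ * (-f₁ * (x - y) ^ 2 / 2) + b₂⁻¹ * (x - y) ^ 2 / 2 := by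
        rw [div_le_iff₀ (by positivity)]
        field_simp
        nlinarith [mul_le_mul_of_nonneg_right hγf₁ (sq_nonneg (x - y))]
    _ ≤ _ := add_le_add (mul_le_mul_of_nonneg_left hf_bregman hγ.le) hG_bregman

/-- Coercivity of the weighted sum of Bregman distances for small `γ`. -/
theorem weighted_bregman_coercivity
    (b : ℝ → ℝ) (b₁ b₂ : ℝ) (hb₁ : 0 < b₁)
    (hbl : ∀ s, b₁ ≤ b s) (hbu : ∀ s, b s ≤ b₂)
    (hbc : Continuous b)
    (G : ℝ → ℝ)
    (hG : ∀ s, G s = ∫ r in (0:ℝ)..s, ∫ u in (0:ℝ)..r, (b u)⁻¹)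
    (f f' f'' : ℝ → ℝ)
    (hf' : ∀ s, HasDerivAt f (f' s) s)
    (hf'' : ∀ s, HasDerivAt f' (f'' s) s)
    (f₁ : ℝ) (hf₁ : 0 < f₁)
    (hsemi : ∀ s, -f₁ ≤ f'' s)
    (γ : ℝ) (hγ : 0 < γ) (hγsmall : γ ≤ 1 / (2 * f₁ * b₂)) :
    ∀ x y : ℝ, (x - y) ^ 2 / (4 * b₂) ≤
      γ * (f x - f y - f' y * (x - y)) + (G x - G y - deriv G y * (x - y)) :=
  weighted_bregman_coercivity_general b b₁ b₂ hb₁ hbl hbu hbc G hG f f' f'' hf' hf'' f₁ hsemi γ hγ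
    hγsmall
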